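/- arXiv:1704.03497 — 2 statements merged into one kernel-verified Lean document; each statement's English description precedes it below -/
import Mathlib

section
/- For f : ℝ × ℝ → ℝ twice continuously differentiable on [a,b] × [c,d] with a < b, c < d, and any (x,y) ∈ [a,b] × [c,d], the following Montgomery-type identity holds: f(x,y) - P(f)(x,y) = (1/4) Q(f)(x,y), where P(f)(x,y) = (1/2)[f(x,c) + f(x,d) + f(a,y) + f(b,y)] - (1/4)[f(a,c) + f(a,d) + f(b,c) + f(b,d)] and Q(f)(x,y) = ∫_a^x ∫_c^y ∂²f/∂s∂t ds dt - ∫_a^x ∫_y^d ∂²f/∂s∂t ds dt - ∫_x^b ∫_c^y ∂²f/∂s∂t ds dt + ∫_x^b ∫_y^d ∂²f/∂s∂t ds dt. -/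
open MeasureTheory Set

/-- Boundary-average functional `P(f)(x,y)` on the rectangle `[a,b] × [c,d]`. -/
noncomputable def Pbd (a b c d : ℝ) (h : ℝ → ℝ → ℝ) (x y : ℝ) : ℝ :=
  (1 / 2) * (h x c + h x d + h a y + h b y)
    - (1 / 4) * (h a c + h a d + h b c + h b d)

/-- `Q(F)(x,y)` where `F = D₂D₁f`: alternating sum of the four corner double integrals. -/
noncomputable def Qbd (a b c d : ℝ) (F : ℝ → ℝ → ℝ) (x y : ℝ) : ℝ :=
  (∫ t in a..x, ∫ s in c..y, F t s) - (∫ t in a..x, ∫ s in y..d, F t s)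
    - (∫ t in x..b, ∫ s in c..y, F t s) + (∫ t in x..b, ∫ s in y..d, F t s)

/-! Integrating the mixed partial over a subrectangle `[p,q] × [r,w]` gives, by the fundamental
theorem of calculus in each variable, the rectangle increment `f(q,w) - f(q,r) - f(p,w) + f(p,r)`.
The point `(x,y)` cuts `[a,b] × [c,d]` into four subrectangles, and the alternating sum of their
increments is `4 (f(x,y) - P(f)(x,y))`. -/

universe u v

theorem ContinuousOn.exists_continuousMap_eqOn {X : Type u} {Y : Type v} [TopologicalSpace X]
    [NormalSpace X] [TopologicalSpace Y] [TietzeExtension.{u, v} Y] {f : X → Y} {s : Set X}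
    (hs : IsClosed s) (hf : ContinuousOn f s) : ∃ g : C(X, Y), EqOn g f s := by
  obtain ⟨g, hg⟩ := ContinuousMap.exists_restrict_eq hs ⟨s.domRestrict f, hf.domRestrict⟩
  exact ⟨g, fun x hx => congr($hg ⟨x, hx⟩)⟩

theorem ContinuousOn.continuousOn_intervalIntegral {X : Type*} [PseudoMetricSpace X]
    {F : X → ℝ → ℝ} {s : Set X} (hs : IsClosed s) {r w : ℝ}
    (hF : ContinuousOn (Function.uncurry F) (s ×ˢ uIcc r w)) :
    ContinuousOn (fun x => ∫ t in r..w, F x t) s := by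
  -- Tietze: a global continuous extension of `F` reduces this to the parametric integral lemma.
  obtain ⟨G, hG⟩ := hF.exists_continuousMap_eqOn (hs.prod isClosed_Icc)
  have hGF : EqOn (fun x => ∫ t in r..w, G (x, t)) (fun x => ∫ t in r..w, F x t) s :=
    fun x hx => intervalIntegral.integral_congr fun t ht => hG ⟨hx, ht⟩
  exact ((intervalIntegral.continuous_parametric_intervalIntegral_of_continuous'
    (f := fun x t => G (x, t)) G.continuous r w).continuousOn).congr hGF.symm

def rectIncrement (f : ℝ → ℝ → ℝ) (p q r w : ℝ) : ℝ :=
  f q w - f q r - f p w + f p r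

theorem integral_integral_eq_rectIncrement {f f1 F : ℝ → ℝ → ℝ} {p q r w : ℝ}
    (hf1 : ∀ t ∈ uIcc p q, ∀ s ∈ uIcc r w, HasDerivAt (fun t => f t s) (f1 t s) t)
    (hf2 : ∀ t ∈ uIcc p q, ∀ s ∈ uIcc r w, HasDerivAt (fun s => f1 t s) (F t s) s)
    (hF : ContinuousOn (Function.uncurry F) (uIcc p q ×ˢ uIcc r w)) :
    ∫ t in p..q, ∫ s in r..w, F t s = rectIncrement f p q r w := by
  have inner : ∀ t ∈ uIcc p q, ∫ s in r..w, F t s = f1 t w - f1 t r := fun t ht =>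
    intervalIntegral.integral_eq_sub_of_hasDerivAt (hf2 t ht)
      (hF.uncurry_left t ht).intervalIntegrable
  have outer_cont : ContinuousOn (fun t => ∫ s in r..w, F t s) (uIcc p q) :=
    hF.continuousOn_intervalIntegral isClosed_Icc
  calc ∫ t in p..q, ∫ s in r..w, F t s = ∫ t in p..q, (f1 t w - f1 t r) :=
        intervalIntegral.integral_congr inner
    _ = (f q w - f q r) - (f p w - f p r) :=
        intervalIntegral.integral_eq_sub_of_hasDerivAt (f := fun t => f t w - f t r)
          (fun t ht => (hf1 t ht w right_mem_uIcc).sub (hf1 t ht r left_mem_uIcc))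
          ((outer_cont.congr fun t ht => (inner t ht).symm).intervalIntegrable)
    _ = rectIncrement f p q r w := by unfold rectIncrement; ring

theorem sub_Pbd_eq_rectIncrement (f : ℝ → ℝ → ℝ) (a b c d x y : ℝ) :
    f x y - Pbd a b c d f x y = (1 / 4) * (rectIncrement f a x c y - rectIncrement f a x y d
      - rectIncrement f x b c y + rectIncrement f x b y d) := by
  unfold Pbd rectIncrement
  ring

theorem montgomery_identity_double_general
    (a b c d : ℝ)
    (f f1 F : ℝ → ℝ → ℝ)
    (hf1 : ∀ x ∈ Icc a b, ∀ y ∈ Icc c d, HasDerivAt (fun t => f t y) (f1 x y) x)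
    (hf2 : ∀ x ∈ Icc a b, ∀ y ∈ Icc c d, HasDerivAt (fun s => f1 x s) (F x y) y)
    (hF : ContinuousOn (fun p : ℝ × ℝ => F p.1 p.2) (Icc a b ×ˢ Icc c d))
    (x y : ℝ) (hx : x ∈ Icc a b) (hy : y ∈ Icc c d) :
    f x y - Pbd a b c d f x y = (1 / 4) * Qbd a b c d F x y := by
  have rect : ∀ p ∈ Icc a b, ∀ q ∈ Icc a b, ∀ r ∈ Icc c d, ∀ w ∈ Icc c d,
      ∫ t in p..q, ∫ s in r..w, F t s = rectIncrement f p q r w := by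
    intro p hp q hq r hr w hw
    have hpq := uIcc_subset_Icc hp hq
    have hrw := uIcc_subset_Icc hr hw
    exact integral_integral_eq_rectIncrement (fun t ht s hs => hf1 t (hpq ht) s (hrw hs))
      (fun t ht s hs => hf2 t (hpq ht) s (hrw hs)) (hF.mono (prod_mono hpq hrw))
  have ha : a ∈ Icc a b := left_mem_Icc.2 (hx.1.trans hx.2)
  have hb : b ∈ Icc a b := right_mem_Icc.2 (hx.1.trans hx.2)
  have hc : c ∈ Icc c d := left_mem_Icc.2 (hy.1.trans hy.2)
  have hd : d ∈ Icc c d := right_mem_Icc.2 (hy.1.trans hy.2)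
  rw [sub_Pbd_eq_rectIncrement, Qbd, rect a ha x hx c hc y hy, rect a ha x hx y hy d hd,
    rect x hx b hb c hc y hy, rect x hx b hb y hy d hd]

theorem montgomery_identity_double
    (a b c d : ℝ) (hab : a < b) (hcd : c < d)
    (f f1 F : ℝ → ℝ → ℝ)
    (hf1 : ∀ x ∈ Icc a b, ∀ y ∈ Icc c d, HasDerivAt (fun t => f t y) (f1 x y) x)
    (hf2 : ∀ x ∈ Icc a b, ∀ y ∈ Icc c d, HasDerivAt (fun s => f1 x s) (F x y) y)
    (hF : ContinuousOn (fun p : ℝ × ℝ => F p.1 p.2) (Icc a b ×ˢ Icc c d))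
    (x y : ℝ) (hx : x ∈ Icc a b) (hy : y ∈ Icc c d) :
    f x y - Pbd a b c d f x y = (1 / 4) * Qbd a b c d F x y :=
  montgomery_identity_double_general a b c d f f1 F hf1 hf2 hF x y hx hy
end

section
/- Let f : ℤ × ℤ → ℝ and let k, r ≥ 1 be integers. For 1 ≤ x ≤ k+1, 1 ≤ y ≤ r+1, the discrete Montgomery identity holds: f(x,y) - (1/2)[f(x,1) + f(x,r+1) + f(1,y) + f(k+1,y)] + (1/4)[f(1,1) + f(1,r+1) + f(k+1,1) + f(k+1,r+1)] = (1/4)[∑_{s=1}^{x-1} ∑_{t=1}^{y-1} Δ₂Δ₁f(s,t) - ∑_{s=1}^{x-1} ∑_{t=y}^{r} Δ₂Δ₁f(s,t) - ∑_{s=x}^{k} ∑_{t=1}^{y-1} Δ₂Δ₁f(s,t) + ∑_{s=x}^{k} ∑_{t=y}^{r} Δ₂Δ₁f(s,t)], where Δ₂Δ₁f(s,t) = f(s+1,t+1) - f(s+1,t) - f(s,t+1) + f(s,t). -/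
/-!
The mixed difference `dd f` telescopes in both variables, so its sum over a rectangle is the
alternating sum of `f` at the four corners of the rectangle. The four rectangles in the identity
share the corner `(x, y)`, and with the signs `+ - - +` the remaining corners combine into the
edge and corner terms of the left-hand side.
-/

open Finset

/-- Mixed forward difference operator. -/
def dd (h : ℤ → ℤ → ℝ) (s t : ℤ) : ℝ :=
  h (s + 1) (t + 1) - h (s + 1) t - h s (t + 1) + h s t

theorem Finset.sum_Ico_sub_telescope {M : Type*} [AddCommGroup M] (g : ℤ → M) {a b : ℤ}
    (hab : a ≤ b) : ∑ s ∈ Ico a b, (g (s + 1) - g s) = g b - g a := by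
  induction b, hab using Int.leInduction with
  | base => simp
  | succ n hn ih =>
    rw [← insert_Ico_right_eq_Ico_add_one hn, sum_insert (by simp), ih]
    abel

theorem Finset.sum_Icc_sub_telescope {M : Type*} [AddCommGroup M] (g : ℤ → M) {a b : ℤ}
    (hab : a ≤ b + 1) : ∑ s ∈ Icc a b, (g (s + 1) - g s) = g (b + 1) - g a := by
  rw [← Ico_add_one_right_eq_Icc]
  exact sum_Ico_sub_telescope g hab

theorem dd_eq_sub_sub (h : ℤ → ℤ → ℝ) (s t : ℤ) :
    dd h s t = (h (s + 1) (t + 1) - h s (t + 1)) - (h (s + 1) t - h s t) := by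
  unfold dd
  ring

theorem sum_Icc_sum_Icc_dd (f : ℤ → ℤ → ℝ) {a b c d : ℤ} (hab : a ≤ b + 1) (hcd : c ≤ d + 1) :
    ∑ s ∈ Icc a b, ∑ t ∈ Icc c d, dd f s t
      = f (b + 1) (d + 1) - f (b + 1) c - f a (d + 1) + f a c := by
  simp only [dd_eq_sub_sub, sum_Icc_sub_telescope (fun t => _ - _) hcd]
  rw [sum_congr rfl fun s _ => sub_sub_sub_comm _ _ _ _,
    sum_Icc_sub_telescope (fun s => f s (d + 1) - f s c) hab]
  ring

theorem discrete_montgomery_identity_general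
    (k r : ℤ) (f : ℤ → ℤ → ℝ)
    (x y : ℤ) (hx : 1 ≤ x ∧ x ≤ k + 1) (hy : 1 ≤ y ∧ y ≤ r + 1) :
    f x y
        - (1 / 2) * (f x 1 + f x (r + 1) + f 1 y + f (k + 1) y)
        + (1 / 4) * (f 1 1 + f 1 (r + 1) + f (k + 1) 1 + f (k + 1) (r + 1))
      = (1 / 4) *
        ((∑ s ∈ Icc (1 : ℤ) (x - 1), ∑ t ∈ Icc (1 : ℤ) (y - 1), dd f s t)
          - (∑ s ∈ Icc (1 : ℤ) (x - 1), ∑ t ∈ Icc y r, dd f s t)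
          - (∑ s ∈ Icc x k, ∑ t ∈ Icc (1 : ℤ) (y - 1), dd f s t)
          + (∑ s ∈ Icc x k, ∑ t ∈ Icc y r, dd f s t)) := by
  obtain ⟨hx1, hxk⟩ := hx
  obtain ⟨hy1, hyr⟩ := hy
  rw [sum_Icc_sum_Icc_dd f (by omega : 1 ≤ x - 1 + 1) (by omega : 1 ≤ y - 1 + 1),
    sum_Icc_sum_Icc_dd f (by omega : 1 ≤ x - 1 + 1) hyr,
    sum_Icc_sum_Icc_dd f hxk (by omega : 1 ≤ y - 1 + 1),
    sum_Icc_sum_Icc_dd f hxk hyr, sub_add_cancel, sub_add_cancel]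
  ring

theorem discrete_montgomery_identity
    (k r : ℤ) (hk : 1 ≤ k) (hr : 1 ≤ r) (f : ℤ → ℤ → ℝ)
    (x y : ℤ) (hx : 1 ≤ x ∧ x ≤ k + 1) (hy : 1 ≤ y ∧ y ≤ r + 1) :
    f x y
        - (1 / 2) * (f x 1 + f x (r + 1) + f 1 y + f (k + 1) y)
        + (1 / 4) * (f 1 1 + f 1 (r + 1) + f (k + 1) 1 + f (k + 1) (r + 1))
      = (1 / 4) *
        ((∑ s ∈ Icc (1 : ℤ) (x - 1), ∑ t ∈ Icc (1 : ℤ) (y - 1), dd f s t)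
          - (∑ s ∈ Icc (1 : ℤ) (x - 1), ∑ t ∈ Icc y r, dd f s t)
          - (∑ s ∈ Icc x k, ∑ t ∈ Icc (1 : ℤ) (y - 1), dd f s t)
          + (∑ s ∈ Icc x k, ∑ t ∈ Icc y r, dd f s t)) :=
  discrete_montgomery_identity_general k r f x y hx hy
end
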